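/- arXiv:1904.10029 — 2 statements merged into one kernel-verified Lean document; each statement's English description precedes it below -/
import Mathlib

section
/- A pattern p is avoidable in the ordinary sense if and only if p is avoidable up to ≃. -/
/-- `x` is a (finite, contiguous) factor of the infinite word `w`. -/
def InfFactor {A : Type*} (x : List A) (w : ℕ → A) : Prop :=
  ∃ i : ℕ, x = (List.range x.length).map fun j => w (i + j)

/-- Reversal-equivalence of words: `x ≃ x'` iff `x' = x` or `x'` is the reversal of `x`. -/
def SimRev {A : Type*} (x x' : List A) : Prop := x' = x ∨ x' = x.reverse

/-- The infinite word `w` encounters the pattern `p` up to the relation `sim`: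
`w` has a factor `X₁X₂⋯Xₙ` with each `Xᵢ` nonempty and `sim Xᵢ Xⱼ` whenever `pᵢ = pⱼ`. -/
def Encounters {V A : Type*} (sim : List A → List A → Prop) (p : List V) (w : ℕ → A) : Prop :=
  ∃ X : List (List A), X.length = p.length ∧ (∀ x ∈ X, x ≠ []) ∧
    InfFactor X.flatten w ∧
    ∀ i j : ℕ, i < p.length → j < p.length → p[i]? = p[j]? →
      sim (X.getD i []) (X.getD j [])

/-! An ordinary encounter is an encounter up to `≃`, so only "avoidable ⇒ avoidable up to `≃`"
needs an idea. Write each letter `a` at position `n` of an avoiding word as the pair `(a, n mod 3)`.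
In this marked word a factor `x` of length `≥ 2` never has its reversal as a factor: phases grow
by `1` along any factor, so if the last two letters of `x` have phases `r, r + 1`, then in an
occurrence of `x.reverse` the letter of phase `r` would also need phase `r + 2`. Hence an encounter up to `≃` in the marked word is an ordinary encounter, and
forgetting the marks turns it into an ordinary encounter in the original word. -/

section InfFactor

variable {A : Type*}

theorem infFactor_iff {x : List A} {w : ℕ → A} :
    InfFactor x w ↔ ∃ i, ∀ j (hj : j < x.length), x[j] = w (i + j) := by
  constructor
  · rintro ⟨i, hi⟩
    exact ⟨i, fun j hj => by rw [List.getElem_of_eq hi]; simp⟩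
  · rintro ⟨i, hi⟩
    exact ⟨i, List.ext_getElem (by simp) fun j hj _ => by simp [hi j hj]⟩

theorem InfFactor.of_infix {x y : List A} {w : ℕ → A} (hxy : x <:+: y) (hy : InfFactor y w) :
    InfFactor x w := by
  obtain ⟨s, t, rfl⟩ := hxy
  obtain ⟨i, hi⟩ := infFactor_iff.mp hy
  refine infFactor_iff.mpr ⟨i + s.length, fun j hj => ?_⟩
  have hlen : s.length + j < (s ++ x ++ t).length := by simp; omega
  have hget : (s ++ x ++ t)[s.length + j] = x[j] := by
    rw [List.getElem_append_left (by simp; omega), List.getElem_append_right (by omega)]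
    simp
  rw [← hget, hi _ hlen, Nat.add_assoc]

theorem InfFactor.map {B : Type*} {x : List A} {w : ℕ → A} (f : A → B) (hx : InfFactor x w) :
    InfFactor (x.map f) (f ∘ w) := by
  obtain ⟨i, hi⟩ := infFactor_iff.mp hx
  exact infFactor_iff.mpr ⟨i, fun j hj => by simp [hi j (by simpa using hj)]⟩

theorem infFactor_nil (w : ℕ → A) : InfFactor [] w := ⟨0, rfl⟩

theorem reverse_eq_self_of_infFactor_of_phase {v : ℕ → A} (φ : A → ℕ) (hφ : ∀ n, φ (v n) = n % 3)
    {x : List A} (hx : InfFactor x v) (hrev : InfFactor x.reverse v) : x.reverse = x := by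
  by_cases hlen : x.length ≤ 1
  · match x, hlen with
    | [], _ | [_], _ => rfl
  obtain ⟨a, ha⟩ := infFactor_iff.mp hx
  obtain ⟨b, hb⟩ := infFactor_iff.mp hrev
  have hlast := hb 0 (by simp; omega)
  have hnext := hb 1 (by simp; omega)
  rw [List.getElem_reverse, ha _ (by omega)] at hlast hnext
  have hphase_last := congrArg φ hlast
  have hphase_next := congrArg φ hnext
  rw [hφ, hφ] at hphase_last hphase_next
  omega

end InfFactor

namespace Encounters

variable {V A : Type*} {sim : List A → List A → Prop} {p : List V} {w : ℕ → A}

theorem infFactor_getD {X : List (List A)} (h : InfFactor X.flatten w) (i : ℕ) :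
    InfFactor (X.getD i []) w := by
  rcases lt_or_ge i X.length with hi | hi
  · rw [List.getD_eq_getElem _ _ hi]
    exact h.of_infix (List.infix_of_mem_flatten (X.getElem_mem hi))
  · rw [List.getD_eq_default _ _ hi]
    exact infFactor_nil w

theorem of_rel_on_factors {sim' : List A → List A → Prop} (h : Encounters sim p w)
    (hrel : ∀ x y, InfFactor x w → InfFactor y w → sim x y → sim' x y) :
    Encounters sim' p w := by
  obtain ⟨X, hlen, hne, hfac, hsim⟩ := h
  exact ⟨X, hlen, hne, hfac, fun i j hi hj hij =>
    hrel _ _ (infFactor_getD hfac i) (infFactor_getD hfac j) (hsim i j hi hj hij)⟩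

theorem map {B : Type*} {sim' : List B → List B → Prop} (f : A → B)
    (hf : ∀ x y, sim x y → sim' (x.map f) (y.map f)) (h : Encounters sim p w) :
    Encounters sim' p (f ∘ w) := by
  obtain ⟨X, hlen, hne, hfac, hsim⟩ := h
  refine ⟨X.map (List.map f), by simpa using hlen, ?_, ?_, fun i j hi hj hij => ?_⟩
  · simpa using hne
  · simpa [List.map_flatten] using hfac.map f
  · have hi' : i < X.length := hlen ▸ hi
    have hj' : j < X.length := hlen ▸ hj
    have hmapped := hf _ _ (hsim i j hi hj hij)
    rw [List.getD_eq_getElem _ _ hi', List.getD_eq_getElem _ _ hj'] at hmapped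
    rwa [List.getD_eq_getElem _ _ (by simpa using hi'),
      List.getD_eq_getElem _ _ (by simpa using hj'), List.getElem_map, List.getElem_map]

end Encounters

section Marking

variable {k : ℕ}

/-- The letter `a` at position `n` becomes `3 a + n % 3`, encoding the pair `(a, n mod 3)`. -/
def markWord (w : ℕ → Fin k) (n : ℕ) : Fin (3 * k) :=
  ⟨3 * (w n).val + n % 3, by have := (w n).2; omega⟩

def unmark (a : Fin (3 * k)) : Fin k := ⟨a.val / 3, by have := a.2; omega⟩

theorem unmark_comp_markWord (w : ℕ → Fin k) : unmark ∘ markWord w = w := by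
  funext n
  ext
  simp only [Function.comp, unmark, markWord]
  omega

theorem markWord_val_mod (w : ℕ → Fin k) (n : ℕ) : (markWord w n).val % 3 = n % 3 := by
  simp [markWord]

theorem encounters_eq_of_encounters_simRev_markWord {V : Type*} {p : List V} {w : ℕ → Fin k}
    (h : Encounters SimRev p (markWord w)) : Encounters Eq p w := by
  have hEq : Encounters Eq p (markWord w) := h.of_rel_on_factors fun x y hx hy hxy => by
    rcases hxy with rfl | rfl
    · rfl
    · exact (reverse_eq_self_of_infFactor_of_phase (fun a => a.val % 3)
        (markWord_val_mod w) hx hy).symm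
  rw [← unmark_comp_markWord w]
  exact hEq.map unmark fun x y hxy => congrArg _ hxy

end Marking

theorem avoidable_iff_avoidable_upto_rev_general {V : Type*} (p : List V) :
    (∃ k : ℕ, 0 < k ∧ ∃ w : ℕ → Fin k, ¬ Encounters Eq p w) ↔
    (∃ k : ℕ, 0 < k ∧ ∃ w : ℕ → Fin k, ¬ Encounters SimRev p w) := by
  constructor
  · rintro ⟨k, hk, w, hw⟩
    exact ⟨3 * k, by omega, markWord w,
      fun h => hw (encounters_eq_of_encounters_simRev_markWord h)⟩
  · rintro ⟨k, hk, w, hw⟩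
    exact ⟨k, hk, w, fun h => hw (h.of_rel_on_factors fun _ _ _ _ hxy => Or.inl hxy.symm)⟩

/-- A pattern `p` is avoidable in the ordinary sense if and only if it is avoidable
up to `≃` (reversal-equivalence). -/
theorem avoidable_iff_avoidable_upto_rev {V : Type*} (p : List V) (hp : p ≠ []) :
    (∃ k : ℕ, 0 < k ∧ ∃ w : ℕ → Fin k, ¬ Encounters Eq p w) ↔
    (∃ k : ℕ, 0 < k ∧ ∃ w : ℕ → Fin k, ¬ Encounters SimRev p w) :=
  avoidable_iff_avoidable_upto_rev_general p
end

section
/- For every integer k ≥ 4, the undirected repetition threshold satisfies URT(k) ≥ (k−1)/(k−2). -/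
/-- `z` is an undirected `r`-power: `z = x ++ y ++ x'` with `x` nonempty,
`x' = x` or `x' = x.reverse`, and `|x y x'| / |x y| = r`. -/
def IsUndirectedPow {A : Type*} (r : ℚ) (z : List A) : Prop :=
  ∃ x y x' : List A, z = x ++ y ++ x' ∧ x ≠ [] ∧ (x' = x ∨ x' = x.reverse) ∧
    (z.length : ℚ) = r * ((x.length : ℚ) + (y.length : ℚ))

/-- `z` is an ordinary `r`-power: `z = x ++ y ++ x` with `x` nonempty and `|x y x| / |x y| = r`. -/
def IsOrdinaryPow {A : Type*} (r : ℚ) (z : List A) : Prop :=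
  ∃ x y : List A, z = x ++ y ++ x ∧ x ≠ [] ∧
    (z.length : ℚ) = r * ((x.length : ℚ) + (y.length : ℚ))

/-- The infinite word `w` is undirected `α`-free: no factor of `w` is an undirected
`r`-power with rational `r ≥ α` (where `1 < r ≤ 2`). -/
def UndirectedFree {A : Type*} (α : ℝ) (w : ℕ → A) : Prop :=
  ∀ z : List A, InfFactor z w →
    ∀ r : ℚ, 1 < r → r ≤ 2 → α ≤ (r : ℝ) → ¬ IsUndirectedPow r z

/-- The infinite word `w` is undirected `α⁺`-free: no factor of `w` is an undirected
`r`-power with rational `r > α` (where `1 < r ≤ 2`). -/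
def UndirectedPlusFree {A : Type*} (α : ℝ) (w : ℕ → A) : Prop :=
  ∀ z : List A, InfFactor z w →
    ∀ r : ℚ, 1 < r → r ≤ 2 → α < (r : ℝ) → ¬ IsUndirectedPow r z

/-- The infinite word `w` is (ordinary) `α`-free. -/
def OrdinaryFree {A : Type*} (α : ℝ) (w : ℕ → A) : Prop :=
  ∀ z : List A, InfFactor z w →
    ∀ r : ℚ, 1 < r → r ≤ 2 → α ≤ (r : ℝ) → ¬ IsOrdinaryPow r z

/-- The infinite word `w` is (ordinary) `α⁺`-free. -/
def OrdinaryPlusFree {A : Type*} (α : ℝ) (w : ℕ → A) : Prop :=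
  ∀ z : List A, InfFactor z w →
    ∀ r : ℚ, 1 < r → r ≤ 2 → α < (r : ℝ) → ¬ IsOrdinaryPow r z

/-- The undirected repetition threshold for `k` letters: the infimum of the set of
rationals `r ∈ (1, 2]` such that undirected `r`-powers are `k`-avoidable. -/
noncomputable def URT (k : ℕ) : ℝ :=
  sInf {a : ℝ | ∃ r : ℚ, a = (r : ℝ) ∧ 1 < r ∧ r ≤ 2 ∧
    ∃ w : ℕ → Fin k, UndirectedFree (r : ℝ) w}

/-- The (ordinary) repetition threshold for `k` letters. -/
noncomputable def RT (k : ℕ) : ℝ :=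
  sInf {a : ℝ | ∃ r : ℚ, a = (r : ℝ) ∧ 1 < r ∧ r ≤ 2 ∧
    ∃ w : ℕ → Fin k, OrdinaryFree (r : ℝ) w}

/-!
If `w` over `k` letters avoids undirected repetitions `x y x'` with `|x y| ≤ (k - 2) |x|`, then
letters at distance at most `k - 2` differ, and no two-letter factor recurs, directly or
reversed, at distance `k - 1` or `k`. Hence some window of `k` consecutive letters contains every
letter, and the letter after such a window must equal its first letter. The next window then
has the same property, so the two-letter factor at the start of the first window recurs at
distance `k`.

The set defining `URT k` is nonempty: the two-block coding of the overlap-free Thue–Morse word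
is a square-free word over four letters, and a square-free word is undirected `2`-free because
`x x.reverse` contains the square `a a` in its middle.
-/

section Factors

variable {α : Type*}

def factorAt (w : ℕ → α) (i n : ℕ) : List α := (List.range n).map fun j => w (i + j)

@[simp] lemma length_factorAt (w : ℕ → α) (i n : ℕ) : (factorAt w i n).length = n := by
  simp [factorAt]

@[simp] lemma getElem_factorAt (w : ℕ → α) (i n j : ℕ) (hj : j < (factorAt w i n).length) :
    (factorAt w i n)[j] = w (i + j) := by
  simp [factorAt]

lemma infFactor_factorAt (w : ℕ → α) (i n : ℕ) : InfFactor (factorAt w i n) w :=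
  ⟨i, by simp [factorAt]⟩

lemma factorAt_add (w : ℕ → α) (i m n : ℕ) :
    factorAt w i (m + n) = factorAt w i m ++ factorAt w (i + m) n := by
  simp only [factorAt, List.range_add, List.map_append, List.map_map]
  congr 1
  exact List.map_congr_left fun j _ => by simp [add_assoc]

lemma factorAt_one (w : ℕ → α) (i : ℕ) : factorAt w i 1 = [w i] := by
  simp [factorAt]

lemma factorAt_two (w : ℕ → α) (i : ℕ) : factorAt w i 2 = [w i, w (i + 1)] := by
  simp [factorAt, List.range_succ]

lemma factorAt_eq_factorAt_iff {w : ℕ → α} {a b n : ℕ} :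
    factorAt w a n = factorAt w b n ↔ ∀ j < n, w (a + j) = w (b + j) := by
  simp [List.ext_get_iff]

def IsSquareFree (w : ℕ → α) : Prop :=
  ∀ i p, 0 < p → ¬ ∀ j < p, w (i + p + j) = w (i + j)

lemma IsSquareFree.comp {β : Type*} {w : ℕ → α} (hw : IsSquareFree w) {f : α → β}
    (hf : Function.Injective f) : IsSquareFree (f ∘ w) :=
  fun i p hp H => hw i p hp fun j hj => hf (H j hj)

lemma IsSquareFree.undirectedFree_two {w : ℕ → α} (hw : IsSquareFree w) :
    UndirectedFree 2 w := by
  rintro z ⟨i, hi⟩ r - hr2 h2r ⟨x, y, x', rfl, hx, hx', hlen⟩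
  obtain rfl : r = 2 := le_antisymm hr2 (by exact_mod_cast h2r)
  have hx'len : x'.length = x.length := by rcases hx' with rfl | rfl <;> simp
  have hy : y = [] := by
    simp only [List.length_append, hx'len] at hlen
    push_cast at hlen
    exact List.length_eq_zero_iff.mp (by exact_mod_cast (by linarith : (y.length : ℚ) = 0))
  subst hy
  have hp : 0 < x.length := List.length_pos_iff.mpr hx
  change _ = factorAt w i _ at hi
  rw [List.append_nil, List.length_append, hx'len, factorAt_add] at hi
  obtain ⟨hx₁, hx₂⟩ := List.append_inj hi (by simp)
  generalize x.length = p at hp hx₁ hx₂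
  rw [hx₁, hx₂] at hx'
  rcases hx' with h | h
  · exact hw i p hp fun j hj => (factorAt_eq_factorAt_iff.mp h.symm j hj).symm
  · refine hw (i + p - 1) 1 one_pos fun j hj => ?_
    obtain rfl : j = 0 := by omega
    have h0 := congrArg (·[0]?) h
    simp only [length_factorAt, hp, getElem?_pos, getElem_factorAt, add_zero, List.length_reverse,
      List.getElem_reverse, tsub_zero, Option.some.injEq] at h0
    convert h0 using 2 <;> omega

end Factors

def thueMorse : ℕ → Bool
  | 0 => false
  | n + 1 => ((n + 1) % 2 == 1).xor (thueMorse ((n + 1) / 2))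
decreasing_by omega

@[simp] lemma thueMorse_two_mul (m : ℕ) : thueMorse (2 * m) = thueMorse m := by
  rcases m with _ | m
  · rfl
  · rw [show 2 * (m + 1) = (2 * m + 1) + 1 by ring, thueMorse]
    simp [show (2 * m + 1 + 1) % 2 = 0 by omega, show (2 * m + 1 + 1) / 2 = m + 1 by omega]

@[simp] lemma thueMorse_two_mul_add_one (m : ℕ) : thueMorse (2 * m + 1) = !thueMorse m := by
  rw [thueMorse]
  simp [show (2 * m + 1) % 2 = 1 by omega, show (2 * m + 1) / 2 = m by omega]

lemma thueMorse_succ_ne_of_even {e : ℕ} (he : Even e) : thueMorse (e + 1) ≠ thueMorse e := by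
  obtain ⟨a, rfl⟩ := he
  simp [← two_mul]

lemma thueMorse_two_mul_add_two_ne_iff (b : ℕ) :
    thueMorse (2 * b + 2) ≠ thueMorse (2 * b + 1) ↔ thueMorse (b + 1) = thueMorse b := by
  rw [show 2 * b + 2 = 2 * (b + 1) by ring, thueMorse_two_mul, thueMorse_two_mul_add_one]
  cases thueMorse b <;> cases thueMorse (b + 1) <;> decide

lemma thueMorse_not_three_equal (m : ℕ) :
    ¬ (thueMorse (m + 1) = thueMorse m ∧ thueMorse (m + 2) = thueMorse (m + 1)) := by
  rintro ⟨h₀, h₁⟩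
  rcases Nat.even_or_odd m with he | ho
  · exact thueMorse_succ_ne_of_even he h₀
  · exact thueMorse_succ_ne_of_even ho.add_one h₁

lemma thueMorse_overlap_half {i M : ℕ}
    (H : ∀ j ≤ 2 * M, thueMorse (i + 2 * M + j) = thueMorse (i + j)) :
    ∀ j ≤ M, thueMorse (i / 2 + M + j) = thueMorse (i / 2 + j) := by
  intro j hj
  have h := H (2 * j) (by omega)
  obtain ⟨a, rfl | rfl⟩ := Nat.even_or_odd' i
  · rw [show 2 * a + 2 * M + 2 * j = 2 * (a + M + j) by ring,
      show 2 * a + 2 * j = 2 * (a + j) by ring] at h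
    simpa [show 2 * a / 2 = a by omega] using h
  · rw [show 2 * a + 1 + 2 * M + 2 * j = 2 * (a + M + j) + 1 by ring,
      show 2 * a + 1 + 2 * j = 2 * (a + j) + 1 by ring] at h
    simpa [show (2 * a + 1) / 2 = a by omega] using h

lemma thueMorse_not_odd_overlap {i L : ℕ} (hL : 3 ≤ L) (hodd : Odd L)
    (H : ∀ j ≤ L, thueMorse (i + L + j) = thueMorse (i + j)) : False := by
  have hstep : ∀ j < L, (thueMorse (i + L + j + 1) = thueMorse (i + L + j) ↔
      thueMorse (i + j + 1) = thueMorse (i + j)) := by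
    intro j hj
    have h := H (j + 1) hj
    simp only [← add_assoc] at h
    rw [H j hj.le, h]
  -- The period pairs an even position `e` with an odd one `2 * b + 1`. Thue–Morse changes after
  -- every even position, and after `2 * b + 1` iff it does not change after `b`; so it would be
  -- constant on `b, b + 1, b + 2`.
  obtain ⟨b, e, he, h₀, h₂⟩ : ∃ b e, Even e ∧
      (thueMorse (2 * b + 2) = thueMorse (2 * b + 1) ↔ thueMorse (e + 1) = thueMorse e) ∧
      (thueMorse (2 * (b + 1) + 2) = thueMorse (2 * (b + 1) + 1) ↔
        thueMorse (e + 2 + 1) = thueMorse (e + 2)) := by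
    obtain ⟨m, rfl⟩ := hodd
    obtain ⟨a, rfl | rfl⟩ := Nat.even_or_odd' i
    · refine ⟨a + m, 2 * a, even_two_mul a, ?_, ?_⟩
      · convert hstep 0 (by omega) using 3 <;> omega
      · convert hstep 2 (by omega) using 3 <;> omega
    · refine ⟨a, 2 * a + 1 + (2 * m + 1), ⟨a + m + 1, by ring⟩, ?_, ?_⟩
      · convert (hstep 0 (by omega)).symm using 3; omega
      · convert (hstep 2 (by omega)).symm using 3 <;> omega
  have hb₀ := (thueMorse_two_mul_add_two_ne_iff b).mp
    (h₀.not.mpr (thueMorse_succ_ne_of_even he))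
  have hb₁ := (thueMorse_two_mul_add_two_ne_iff (b + 1)).mp
    (h₂.not.mpr (thueMorse_succ_ne_of_even (he.add even_two)))
  exact thueMorse_not_three_equal b ⟨hb₀, hb₁⟩

theorem thueMorse_not_overlap {L : ℕ} (hL : 0 < L) (i : ℕ) :
    ¬ ∀ j ≤ L, thueMorse (i + L + j) = thueMorse (i + j) := by
  induction L using Nat.strong_induction_on generalizing i with
  | _ L IH =>
    intro H
    obtain ⟨M, rfl | rfl⟩ := Nat.even_or_odd' L
    · exact IH M (by omega) (by omega) (i / 2) (thueMorse_overlap_half H)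
    · rcases Nat.eq_zero_or_pos M with rfl | hM
      · exact thueMorse_not_three_equal i
          ⟨by simpa using H 0 (by omega), by simpa using H 1 (by omega)⟩
      · exact thueMorse_not_odd_overlap (by omega) (odd_two_mul_add_one M) H

def thueMorsePair (n : ℕ) : Bool × Bool := (thueMorse n, thueMorse (n + 1))

lemma isSquareFree_thueMorsePair : IsSquareFree thueMorsePair := by
  intro i p hp H
  refine thueMorse_not_overlap hp i fun j hj => ?_
  rcases hj.lt_or_eq with hj | rfl
  · exact congrArg Prod.fst (H j hj)
  · have h := congrArg Prod.snd (H (j - 1) (by omega))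
    simp only [thueMorsePair] at h
    convert h using 2 <;> omega

lemma exists_undirectedFree_two {k : ℕ} (hk : 4 ≤ k) :
    ∃ w : ℕ → Fin k, UndirectedFree 2 w := by
  obtain ⟨f⟩ := Function.Embedding.nonempty_of_card_le (α := Bool × Bool) (β := Fin k)
    (by simpa using hk)
  exact ⟨f ∘ thueMorsePair, (isSquareFree_thueMorsePair.comp f.injective).undirectedFree_two⟩

lemma UndirectedFree.mono {α : Type*} {w : ℕ → α} {a b : ℝ} (hab : a ≤ b)
    (hw : UndirectedFree a w) : UndirectedFree b w :=
  fun z hz r hr₁ hr₂ hbr => hw z hz r hr₁ hr₂ (hab.trans hbr)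

lemma UndirectedFree.not_factorAt_repeat {α : Type*} {w : ℕ → α} {a : ℝ}
    (hw : UndirectedFree a w) {i d p : ℕ} (hp : 0 < p) (hpd : p ≤ d)
    (ha : a ≤ ((d : ℝ) + p) / d) :
    ¬ (factorAt w (i + d) p = factorAt w i p ∨
      factorAt w (i + d) p = (factorAt w i p).reverse) := by
  intro hrep
  have hd : (0 : ℚ) < d := by exact_mod_cast hp.trans_le hpd
  have hp' : (0 : ℚ) < p := by exact_mod_cast hp
  have hpd' : (p : ℚ) ≤ d := by exact_mod_cast hpd
  refine hw (factorAt w i (d + p)) (infFactor_factorAt w i _) ((d + p) / d)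
    (by rw [lt_div_iff₀ hd]; linarith) (by rw [div_le_iff₀ hd]; linarith)
    (by push_cast; exact ha)
    ⟨factorAt w i p, factorAt w (i + p) (d - p), factorAt w (i + d) p, ?_,
      List.ne_nil_of_length_pos (by simpa using hp), hrep, ?_⟩
  · rw [show d + p = p + (d - p) + p by omega, factorAt_add, factorAt_add,
      show i + (p + (d - p)) = i + d by omega]
  · simp only [length_factorAt, Nat.cast_add, Nat.cast_sub hpd]
    field_simp
    ring

lemma sub_one_div_sub_two_le {k d p : ℕ} (hk : 2 < k) (hd : 0 < d) (hdk : d ≤ (k - 2) * p) :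
    ((k : ℝ) - 1) / ((k : ℝ) - 2) ≤ ((d : ℝ) + p) / d := by
  have hk' : (2 : ℝ) < k := by exact_mod_cast hk
  have hd' : (0 : ℝ) < d := by exact_mod_cast hd
  have hdk' : (d : ℝ) ≤ ((k : ℝ) - 2) * p := by
    have := (Nat.cast_le (α := ℝ)).mpr hdk
    rwa [Nat.cast_mul, Nat.cast_sub hk.le, Nat.cast_two] at this
  rw [div_le_div_iff₀ (by linarith) hd']
  linarith

section Threshold

variable {α : Type*} {k : ℕ} {w : ℕ → α}

lemma UndirectedFree.apply_add_ne (hk : 2 < k)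
    (hw : UndirectedFree (((k : ℝ) - 1) / ((k : ℝ) - 2)) w) {i d : ℕ} (hd : 0 < d)
    (hdk : d ≤ k - 2) : w (i + d) ≠ w i := fun h =>
  hw.not_factorAt_repeat one_pos hd (sub_one_div_sub_two_le hk hd (by simpa using hdk))
    (.inl (by rw [factorAt_one, factorAt_one, h]))

lemma UndirectedFree.pair_ne (hk : 2 < k)
    (hw : UndirectedFree (((k : ℝ) - 1) / ((k : ℝ) - 2)) w) {i d : ℕ} (hd : 2 ≤ d)
    (hdk : d ≤ (k - 2) * 2) (h₀ : w (i + d) = w i) : w (i + d + 1) ≠ w (i + 1) := fun h₁ =>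
  hw.not_factorAt_repeat two_pos hd (sub_one_div_sub_two_le hk (by omega) hdk)
    (.inl (by rw [factorAt_two, factorAt_two, h₀, h₁]))

lemma UndirectedFree.pair_ne_reverse (hk : 2 < k)
    (hw : UndirectedFree (((k : ℝ) - 1) / ((k : ℝ) - 2)) w) {i d : ℕ} (hd : 2 ≤ d)
    (hdk : d ≤ (k - 2) * 2) (h₀ : w (i + d) = w (i + 1)) : w (i + d + 1) ≠ w i := fun h₁ =>
  hw.not_factorAt_repeat two_pos hd (sub_one_div_sub_two_le hk (by omega) hdk)
    (.inr (by rw [factorAt_two, factorAt_two, h₀, h₁]; rfl))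

end Threshold

section Window

variable {k : ℕ} {w : ℕ → Fin k}

lemma injective_window_of_ne (hk : 2 < k)
    (hw : UndirectedFree (((k : ℝ) - 1) / ((k : ℝ) - 2)) w) {n : ℕ}
    (hn : w (n + (k - 1)) ≠ w n) : Function.Injective fun j : Fin k => w (n + j) := by
  have hne : ∀ a b : ℕ, a < b → b < k → w (n + b) ≠ w (n + a) := by
    intro a b hab hb
    by_cases hba : b - a ≤ k - 2
    · simpa [show n + a + (b - a) = n + b by omega] using
        hw.apply_add_ne hk (i := n + a) (by omega) hba
    · obtain ⟨rfl, rfl⟩ : a = 0 ∧ b = k - 1 := by omega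
      simpa using hn
  intro a b hab
  rcases lt_trichotomy (a : ℕ) b with h | h | h
  · exact absurd hab.symm (hne a b h b.2)
  · exact Fin.ext h
  · exact absurd hab (hne b a h a.2)

lemma exists_injective_window (hk : 4 ≤ k)
    (hw : UndirectedFree (((k : ℝ) - 1) / ((k : ℝ) - 2)) w) :
    ∃ n, Function.Injective fun j : Fin k => w (n + j) := by
  by_cases h₀ : w (0 + (k - 1)) = w 0
  · refine ⟨1, injective_window_of_ne (by omega) hw fun h₁ => ?_⟩
    refine hw.pair_ne (by omega) (by omega) (by omega) h₀ ?_
    rwa [show 0 + (k - 1) + 1 = 1 + (k - 1) by omega]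
  · exact ⟨0, injective_window_of_ne (by omega) hw h₀⟩

lemma add_card_ne_of_injective_window (hk : 4 ≤ k)
    (hw : UndirectedFree (((k : ℝ) - 1) / ((k : ℝ) - 2)) w) {n : ℕ}
    (hn : Function.Injective fun j : Fin k => w (n + j)) : w (n + k) ≠ w (n + 1) := by
  intro h
  obtain ⟨⟨j, hjk⟩, hj⟩ := Finite.injective_iff_surjective.mp hn (w (n + k + 1))
  dsimp only at hj
  rcases (by omega : j = 0 ∨ j = 1 ∨ j = 2 ∨ 3 ≤ j) with rfl | rfl | rfl | hj₃
  · exact hw.pair_ne_reverse (by omega) (by omega) (by omega) h (by simpa using hj.symm)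
  · exact hw.apply_add_ne (i := n + k) (by omega) one_pos (by omega) (by rw [← hj, h])
  · refine hw.pair_ne (i := n + 1) (d := k - 1) (by omega) (by omega) (by omega)
      (by rwa [show n + 1 + (k - 1) = n + k by omega]) ?_
    rw [show n + 1 + (k - 1) + 1 = n + k + 1 by omega, ← hj]
  · refine hw.apply_add_ne (i := n + j) (d := k + 1 - j) (by omega) (by omega) (by omega) ?_
    rw [show n + j + (k + 1 - j) = n + k + 1 by omega, hj]

lemma add_card_eq_of_injective_window (hk : 4 ≤ k)
    (hw : UndirectedFree (((k : ℝ) - 1) / ((k : ℝ) - 2)) w) {n : ℕ}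
    (hn : Function.Injective fun j : Fin k => w (n + j)) : w (n + k) = w n := by
  obtain ⟨⟨j, hjk⟩, hj⟩ := Finite.injective_iff_surjective.mp hn (w (n + k))
  dsimp only at hj
  rcases (by omega : j = 0 ∨ j = 1 ∨ 2 ≤ j) with rfl | rfl | hj₂
  · simpa using hj.symm
  · exact absurd hj.symm (add_card_ne_of_injective_window hk hw hn)
  · refine absurd ?_ (hw.apply_add_ne (i := n + j) (d := k - j) (by omega) (by omega) (by omega))
    rw [show n + j + (k - j) = n + k by omega, hj]

theorem not_undirectedFree_sub_one_div_sub_two (hk : 4 ≤ k) (w : ℕ → Fin k) :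
    ¬ UndirectedFree (((k : ℝ) - 1) / ((k : ℝ) - 2)) w := by
  intro hw
  obtain ⟨n, hn⟩ := exists_injective_window hk hw
  have h₀ := add_card_eq_of_injective_window hk hw hn
  have hn₁ : Function.Injective fun j : Fin k => w (n + 1 + j) := by
    refine injective_window_of_ne (by omega) hw ?_
    rw [show n + 1 + (k - 1) = n + k by omega, h₀]
    exact (hw.apply_add_ne (by omega) one_pos (by omega)).symm
  have h₁ := add_card_eq_of_injective_window hk hw hn₁
  refine hw.pair_ne (by omega) (by omega) (by omega) h₀ ?_
  rwa [show n + k + 1 = n + 1 + k by omega]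

end Window

/-- For every `k ≥ 4`, `URT(k) ≥ (k-1)/(k-2)`. -/
theorem URT_lower_bound (k : ℕ) (hk : 4 ≤ k) :
    ((k : ℝ) - 1) / ((k : ℝ) - 2) ≤ URT k := by
  refine le_csInf ?_ ?_
  · obtain ⟨w, hw⟩ := exists_undirectedFree_two hk
    exact ⟨2, 2, by norm_num, by norm_num, by norm_num, w, by exact_mod_cast hw⟩
  · rintro _ ⟨r, rfl, -, -, w, hw⟩
    by_contra! hr
    exact not_undirectedFree_sub_one_div_sub_two hk w (hw.mono hr.le)
end
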